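/- arXiv:1503.03980 — 2 statements merged into one kernel-verified Lean document; each statement's English description precedes it below -/
import Mathlib

section
/- Let F : [0,1]² → ℝ be continuous and let μ* be a doubly stochastic measure on [0,1]² that maximizes ∫ F dμ over all doubly stochastic measures μ on [0,1]². Let C(x,y) = μ*([0,x]×[0,y]) be the associated copula. Suppose [X₁,X₂]×[Y₁,Y₂] ⊆ [0,1]² is a rectangle with C(X₂,Y₂) + C(X₁,Y₁) − C(X₁,Y₂) − C(X₂,Y₁) > 0, and suppose that at every point (x,y) of the open rectangle (X₁,X₂)×(Y₁,Y₂) the mixed second partial derivative ∂²F/∂x∂y exists and is strictly negative. Then for every (x,y) ∈ [X₁,X₂]×[Y₁,Y₂] one has C(x,y) = max( C(x,Y₂) + C(X₂,y) − C(X₂,Y₂), C(x,Y₁) + C(X₁,y) − C(X₁,Y₁) ). -/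
open MeasureTheory Set

/-- A doubly stochastic measure on `[0,1]²`: a Borel probability measure whose
marginals on both coordinates are Lebesgue measure on `[0,1]`. -/
def IsDoublyStochastic (μ : Measure (ℝ × ℝ)) : Prop :=
  IsProbabilityMeasure μ ∧
  (∀ B : Set ℝ, MeasurableSet B → B ⊆ Icc 0 1 → μ (B ×ˢ Icc (0:ℝ) 1) = volume B) ∧
  (∀ B : Set ℝ, MeasurableSet B → B ⊆ Icc 0 1 → μ (Icc (0:ℝ) 1 ×ˢ B) = volume B)

/-- The copula (distribution function) of a measure on `[0,1]²`. -/
noncomputable def copulaOf (μ : Measure (ℝ × ℝ)) (x y : ℝ) : ℝ :=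
  (μ (Icc 0 x ×ˢ Icc 0 y)).toReal

/-!
If `μstar` charged both the box `(X₁, x] × (Y₁, y]` below-left of `(x, y)` and the box
`(x, X₂) × (y, Y₂)` above-right of it, one could take sub-measures `ν₁`, `ν₂` of equal mass from
the two boxes and replace `ν₁ + ν₂` by `(ν₁ univ)⁻¹ (ν₁.fst ⊗ ν₂.snd + ν₂.fst ⊗ ν₁.snd)`. This keeps
both marginals, hence double stochasticity, and changes `∫ F` by
`(ν₁ univ)⁻¹ ∫∫ (F (p.1, q.2) + F (q.1, p.2) - F p - F q) dν₁(p) dν₂(q)`, which is positive because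
a negative mixed derivative makes `F` strictly submodular on the rectangle. So one of the boxes is
null, and inclusion–exclusion for the copula turns this into the identity, the other box having
non-negative mass. The open box has the same mass as the half-open one since a doubly stochastic
measure does not charge lines.
-/

section Marginals
variable {X Y : Type*} [MeasurableSpace X] [MeasurableSpace Y] {ν : Measure (X × Y)}
  {s : Set X} {t : Set Y}

theorem measure_prod_eq_map_fst (hs : MeasurableSet s) (ht : ν (Prod.snd ⁻¹' tᶜ) = 0) :
    ν (s ×ˢ t) = ν.map Prod.fst s := by
  rw [Measure.map_apply measurable_fst hs, prod_eq,
    measure_inter_conull (by rwa [← preimage_compl])]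

theorem measure_prod_eq_map_snd (ht : MeasurableSet t) (hs : ν (Prod.fst ⁻¹' sᶜ) = 0) :
    ν (s ×ˢ t) = ν.map Prod.snd t := by
  rw [Measure.map_apply measurable_snd ht, prod_eq, inter_comm,
    measure_inter_conull (by rwa [← preimage_compl])]

end Marginals

section Exchange

variable {X Y : Type*} [MeasurableSpace X] [MeasurableSpace Y]

noncomputable def exchangeMeasure (ν₁ ν₂ : Measure (X × Y)) : Measure (X × Y) :=
  (ν₁ univ)⁻¹ • ((ν₁.prod ν₂).map (fun z => (z.1.1, z.2.2)) +
    (ν₁.prod ν₂).map (fun z => (z.2.1, z.1.2)))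

variable {ν₁ ν₂ : Measure (X × Y)} [IsFiniteMeasure ν₁] [IsFiniteMeasure ν₂]

instance [NeZero ν₁] : IsFiniteMeasure (exchangeMeasure ν₁ ν₂) :=
  ⟨by
    rw [exchangeMeasure, Measure.smul_apply, smul_eq_mul]
    exact ENNReal.mul_lt_top
      (ENNReal.inv_ne_top.2 (Measure.measure_univ_ne_zero.2 (NeZero.ne ν₁))).lt_top
      (measure_lt_top _ _)⟩

theorem map_fst_exchangeMeasure [NeZero ν₁] (hν : ν₂ univ = ν₁ univ) :
    (exchangeMeasure ν₁ ν₂).map Prod.fst = (ν₁ + ν₂).map Prod.fst := by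
  have h₁ : (ν₁.prod ν₂).map (Prod.fst ∘ fun z => (z.1.1, z.2.2)) = ν₁ univ • ν₁.map Prod.fst := by
    rw [show (Prod.fst ∘ fun z : (X × Y) × (X × Y) => (z.1.1, z.2.2)) = Prod.fst ∘ Prod.fst
      from rfl, ← Measure.map_map measurable_fst measurable_fst, Measure.map_fst_prod,
      Measure.map_smul, hν]
  have h₂ : (ν₁.prod ν₂).map (Prod.fst ∘ fun z => (z.2.1, z.1.2)) = ν₁ univ • ν₂.map Prod.fst := by
    rw [show (Prod.fst ∘ fun z : (X × Y) × (X × Y) => (z.2.1, z.1.2)) = Prod.fst ∘ Prod.snd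
      from rfl, ← Measure.map_map measurable_fst measurable_snd, Measure.map_snd_prod,
      Measure.map_smul]
  rw [exchangeMeasure, Measure.map_smul, Measure.map_add _ _ measurable_fst,
    Measure.map_map measurable_fst (by fun_prop), Measure.map_map measurable_fst (by fun_prop),
    h₁, h₂, ← smul_add, smul_smul, ENNReal.inv_mul_cancel (Measure.measure_univ_ne_zero.2
      (NeZero.ne ν₁)) (measure_ne_top _ _), one_smul, Measure.map_add _ _ measurable_fst]

theorem map_snd_exchangeMeasure [NeZero ν₁] (hν : ν₂ univ = ν₁ univ) :
    (exchangeMeasure ν₁ ν₂).map Prod.snd = (ν₁ + ν₂).map Prod.snd := by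
  have h₁ : (ν₁.prod ν₂).map (Prod.snd ∘ fun z => (z.1.1, z.2.2)) = ν₁ univ • ν₂.map Prod.snd := by
    rw [show (Prod.snd ∘ fun z : (X × Y) × (X × Y) => (z.1.1, z.2.2)) = Prod.snd ∘ Prod.snd
      from rfl, ← Measure.map_map measurable_snd measurable_snd, Measure.map_snd_prod,
      Measure.map_smul]
  have h₂ : (ν₁.prod ν₂).map (Prod.snd ∘ fun z => (z.2.1, z.1.2)) = ν₁ univ • ν₁.map Prod.snd := by
    rw [show (Prod.snd ∘ fun z : (X × Y) × (X × Y) => (z.2.1, z.1.2)) = Prod.snd ∘ Prod.fst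
      from rfl, ← Measure.map_map measurable_snd measurable_fst, Measure.map_fst_prod,
      Measure.map_smul, hν]
  rw [exchangeMeasure, Measure.map_smul, Measure.map_add _ _ measurable_snd,
    Measure.map_map measurable_snd (by fun_prop), Measure.map_map measurable_snd (by fun_prop),
    h₁, h₂, ← smul_add, smul_smul, ENNReal.inv_mul_cancel (Measure.measure_univ_ne_zero.2
      (NeZero.ne ν₁)) (measure_ne_top _ _), one_smul, add_comm, Measure.map_add _ _ measurable_snd]

variable {f : X × Y → ℝ} {C : ℝ}

theorem integral_exchangeMeasure (hf : Measurable f) (hC : ∀ z, ‖f z‖ ≤ C) :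
    ∫ z, f z ∂(exchangeMeasure ν₁ ν₂) =
      (ν₁.real univ)⁻¹ * ∫ z, (f (z.1.1, z.2.2) + f (z.2.1, z.1.2)) ∂(ν₁.prod ν₂) := by
  have hint : ∀ (ρ : Measure ((X × Y) × (X × Y))) [IsFiniteMeasure ρ] (g : _ → X × Y),
      Measurable g → Integrable (fun z => f (g z)) ρ := fun ρ _ g hg =>
    .of_bound (hf.comp hg).aestronglyMeasurable C (ae_of_all _ fun z => hC (g z))
  have hm₁ : Measurable fun z : (X × Y) × (X × Y) => (z.1.1, z.2.2) := by fun_prop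
  have hm₂ : Measurable fun z : (X × Y) × (X × Y) => (z.2.1, z.1.2) := by fun_prop
  rw [exchangeMeasure, integral_smul_measure,
    integral_add_measure ((integrable_map_measure hf.aestronglyMeasurable hm₁.aemeasurable).2
      (hint _ _ hm₁)) ((integrable_map_measure hf.aestronglyMeasurable hm₂.aemeasurable).2
      (hint _ _ hm₂)),
    integral_map hm₁.aemeasurable hf.aestronglyMeasurable,
    integral_map hm₂.aemeasurable hf.aestronglyMeasurable,
    integral_add (hint _ _ hm₁) (hint _ _ hm₂), ENNReal.toReal_inv, smul_eq_mul, measureReal_def]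

theorem integral_add_measure_eq_integral_prod [NeZero ν₁] (hν : ν₂ univ = ν₁ univ)
    (hf : Measurable f) (hC : ∀ z, ‖f z‖ ≤ C) :
    ∫ z, f z ∂(ν₁ + ν₂) = (ν₁.real univ)⁻¹ * ∫ z, (f z.1 + f z.2) ∂(ν₁.prod ν₂) := by
  have hint : ∀ (ρ : Measure (X × Y)) [IsFiniteMeasure ρ], Integrable f ρ := fun ρ _ =>
    .of_bound hf.aestronglyMeasurable C (ae_of_all _ hC)
  have hν' : ν₂.real univ = ν₁.real univ := by rw [measureReal_def, measureReal_def, hν]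
  rw [integral_add_measure (hint ν₁) (hint ν₂),
    integral_add ((hint ν₁).comp_fst ν₂) ((hint ν₂).comp_snd ν₁),
    integral_fun_fst, integral_fun_snd, hν', smul_eq_mul, smul_eq_mul, ← mul_add,
    inv_mul_cancel_left₀ measureReal_univ_ne_zero]

theorem integral_add_measure_lt_integral_exchangeMeasure [NeZero ν₁] (hν : ν₂ univ = ν₁ univ)
    (hf : Measurable f) (hC : ∀ z, ‖f z‖ ≤ C) {A B : Set (X × Y)} (hA : ν₁ Aᶜ = 0)
    (hB : ν₂ Bᶜ = 0) (hAB : ∀ p ∈ A, ∀ q ∈ B, f p + f q < f (p.1, q.2) + f (q.1, p.2)) :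
    ∫ z, f z ∂(ν₁ + ν₂) < ∫ z, f z ∂(exchangeMeasure ν₁ ν₂) := by
  set Δ : (X × Y) × (X × Y) → ℝ := fun z => f (z.1.1, z.2.2) + f (z.2.1, z.1.2) - (f z.1 + f z.2)
  have hΔ : Integrable Δ (ν₁.prod ν₂) :=
    .of_bound (by fun_prop) (4 * C) (ae_of_all _ fun z => by
      simp only [Δ]
      linarith [norm_sub_le (f (z.1.1, z.2.2) + f (z.2.1, z.1.2)) (f z.1 + f z.2),
        norm_add_le (f (z.1.1, z.2.2)) (f (z.2.1, z.1.2)), norm_add_le (f z.1) (f z.2),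
        hC (z.1.1, z.2.2), hC (z.2.1, z.1.2), hC z.1, hC z.2])
  have hpos : ∀ᵐ z ∂ν₁.prod ν₂, 0 < Δ z := by
    filter_upwards [mem_ae_iff.2 (Measure.measure_prod_compl_eq_zero hA hB)] with z hz
    exact sub_pos.2 (hAB z.1 hz.1 z.2 hz.2)
  have hnull : ν₁.prod ν₂ (Function.support Δ)ᶜ = 0 :=
    measure_mono_null (fun z hz hΔz => hz (ne_of_gt hΔz)) (ae_iff.1 hpos)
  have hP : ν₁.prod ν₂ univ ≠ 0 := by
    rw [← univ_prod_univ, Measure.prod_prod, hν]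
    exact mul_ne_zero (Measure.measure_univ_ne_zero.2 (NeZero.ne ν₁))
      (Measure.measure_univ_ne_zero.2 (NeZero.ne ν₁))
  have hint : ∀ g : (X × Y) × (X × Y) → X × Y, Measurable g →
      Integrable (fun z => f (g z)) (ν₁.prod ν₂) := fun g hg =>
    .of_bound (hf.comp hg).aestronglyMeasurable C (ae_of_all _ fun z => hC (g z))
  have hsplit : ∫ z, Δ z ∂ν₁.prod ν₂ = ∫ z, (f (z.1.1, z.2.2) + f (z.2.1, z.1.2)) ∂ν₁.prod ν₂ -
      ∫ z, (f z.1 + f z.2) ∂ν₁.prod ν₂ :=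
    integral_sub ((hint _ (by fun_prop)).add (hint _ (by fun_prop)))
      ((hint _ (by fun_prop)).add (hint _ (by fun_prop)))
  rw [integral_add_measure_eq_integral_prod hν hf hC, integral_exchangeMeasure hf hC, ← sub_pos,
    ← mul_sub, ← hsplit]
  refine mul_pos (inv_pos.2 measureReal_univ_pos) ?_
  rw [integral_pos_iff_support_of_nonneg_ae (hpos.mono fun _ h => h.le) hΔ,
    ← univ_inter (Function.support Δ), measure_inter_conull hnull]
  exact pos_iff_ne_zero.2 hP

end Exchange

section Decomposition
variable {α : Type*} [MeasurableSpace α]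

theorem MeasureTheory.Measure.exists_add_le_of_disjoint (μ : Measure α) [IsFiniteMeasure μ] {A B : Set α}
    (hA : MeasurableSet A) (hB : MeasurableSet B) (hAB : Disjoint A B) (hμA : μ A ≠ 0)
    (hμB : μ B ≠ 0) :
    ∃ ν₁ ν₂ : Measure α, ν₁ + ν₂ ≤ μ ∧ ν₁ ≠ 0 ∧ ν₂ univ = ν₁ univ ∧ ν₁ Aᶜ = 0 ∧ ν₂ Bᶜ = 0 := by
  set m := min (μ A) (μ B)
  have hm : m ≠ 0 := by simp [m, hμA, hμB]
  have piece : ∀ {S : Set α}, MeasurableSet S → m ≤ μ S → μ S ≠ 0 →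
      (m / μ S) • μ.restrict S ≤ μ.restrict S ∧ ((m / μ S) • μ.restrict S) univ = m ∧
        ((m / μ S) • μ.restrict S) Sᶜ = 0 := by
    intro S hS hmS hS0
    refine ⟨Measure.le_iff'.2 fun s => ?_, ?_, ?_⟩
    · rw [Measure.smul_apply, smul_eq_mul]
      exact mul_le_of_le_one_left' (ENNReal.div_le_of_le_mul (by rwa [one_mul]))
    · rw [Measure.smul_apply, Measure.restrict_apply_univ, smul_eq_mul,
        ENNReal.div_mul_cancel hS0 (measure_ne_top _ _)]
    · rw [Measure.smul_apply, Measure.restrict_apply hS.compl, compl_inter_self, measure_empty,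
        smul_zero]
  obtain ⟨hle₁, huniv₁, hnull₁⟩ := piece hA (min_le_left _ _) hμA
  obtain ⟨hle₂, huniv₂, hnull₂⟩ := piece hB (min_le_right _ _) hμB
  refine ⟨_, _, ?_, Measure.measure_univ_ne_zero.1 (by rwa [huniv₁]), huniv₂.trans huniv₁.symm,
    hnull₁, hnull₂⟩
  calc _ ≤ μ.restrict A + μ.restrict B := add_le_add hle₁ hle₂
    _ = μ.restrict (A ∪ B) := (Measure.restrict_union hAB hB).symm
    _ ≤ μ := Measure.restrict_le_self

end Decomposition

section Improvement
variable {X Y : Type*} [MeasurableSpace X] [MeasurableSpace Y]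

theorem exists_map_eq_integral_lt (μ : Measure (X × Y)) [IsFiniteMeasure μ] {A B : Set (X × Y)}
    (hA : MeasurableSet A) (hB : MeasurableSet B) (hμA : μ A ≠ 0) (hμB : μ B ≠ 0)
    {f : X × Y → ℝ} (hf : Measurable f) {C : ℝ} (hC : ∀ z, ‖f z‖ ≤ C)
    (hAB : ∀ p ∈ A, ∀ q ∈ B, f p + f q < f (p.1, q.2) + f (q.1, p.2)) :
    ∃ μ' : Measure (X × Y), μ'.map Prod.fst = μ.map Prod.fst ∧
      μ'.map Prod.snd = μ.map Prod.snd ∧ ∫ z, f z ∂μ < ∫ z, f z ∂μ' := by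
  have hdisj : Disjoint A B := disjoint_left.2 fun p hpA hpB => by simpa using hAB p hpA p hpB
  obtain ⟨ν₁, ν₂, hle, hν₁, hν, hAν₁, hBν₂⟩ :=
    Measure.exists_add_le_of_disjoint μ hA hB hdisj hμA hμB
  have : NeZero ν₁ := ⟨hν₁⟩
  have : IsFiniteMeasure ν₁ := isFiniteMeasure_of_le μ ((Measure.le_add_right le_rfl).trans hle)
  have : IsFiniteMeasure ν₂ := isFiniteMeasure_of_le μ ((Measure.le_add_left le_rfl).trans hle)
  have hint : ∀ (ρ : Measure (X × Y)) [IsFiniteMeasure ρ], Integrable f ρ := fun ρ _ =>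
    .of_bound hf.aestronglyMeasurable C (ae_of_all _ hC)
  have hμ : μ - (ν₁ + ν₂) + (ν₁ + ν₂) = μ := Measure.sub_add_cancel_of_le hle
  refine ⟨μ - (ν₁ + ν₂) + exchangeMeasure ν₁ ν₂, ?_, ?_, ?_⟩
  · rw [Measure.map_add _ _ measurable_fst, map_fst_exchangeMeasure hν,
      ← Measure.map_add _ _ measurable_fst, hμ]
  · rw [Measure.map_add _ _ measurable_snd, map_snd_exchangeMeasure hν,
      ← Measure.map_add _ _ measurable_snd, hμ]
  · conv_lhs => rw [← hμ]
    rw [integral_add_measure (hint (μ - (ν₁ + ν₂))) (hint (ν₁ + ν₂)),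
      integral_add_measure (hint (μ - (ν₁ + ν₂))) (hint (exchangeMeasure ν₁ ν₂))]
    exact (add_lt_add_iff_left _).2
      (integral_add_measure_lt_integral_exchangeMeasure hν hf hC hAν₁ hBν₂ hAB)

end Improvement

namespace IsDoublyStochastic

variable {μ : Measure (ℝ × ℝ)}

theorem measure_compl_unitSquare (hμ : IsDoublyStochastic μ) :
    μ (Icc (0 : ℝ) 1 ×ˢ Icc (0 : ℝ) 1)ᶜ = 0 := by
  have := hμ.1
  rw [prob_compl_eq_zero_iff (measurableSet_Icc.prod measurableSet_Icc),
    hμ.2.1 _ measurableSet_Icc subset_rfl, Real.volume_Icc, sub_zero, ENNReal.ofReal_one]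

theorem measure_singleton_prod_univ (hμ : IsDoublyStochastic μ) (a : ℝ) :
    μ ({a} ×ˢ univ) = 0 := by
  refine measure_mono_null (t := (({a} ∩ Icc 0 1) ×ˢ Icc 0 1) ∪ (Icc 0 1 ×ˢ Icc 0 1)ᶜ) ?_
    (measure_union_null ?_ hμ.measure_compl_unitSquare)
  · rintro ⟨x, y⟩ ⟨hx, -⟩
    by_cases hxy : (x, y) ∈ Icc (0 : ℝ) 1 ×ˢ Icc (0 : ℝ) 1
    · exact Or.inl ⟨⟨hx, hxy.1⟩, hxy.2⟩
    · exact Or.inr hxy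
  · rw [hμ.2.1 _ ((measurableSet_singleton a).inter measurableSet_Icc) inter_subset_right]
    exact measure_mono_null inter_subset_left Real.volume_singleton

theorem measure_univ_prod_singleton (hμ : IsDoublyStochastic μ) (a : ℝ) :
    μ (univ ×ˢ {a}) = 0 := by
  refine measure_mono_null (t := (Icc 0 1 ×ˢ ({a} ∩ Icc 0 1)) ∪ (Icc 0 1 ×ˢ Icc 0 1)ᶜ) ?_
    (measure_union_null ?_ hμ.measure_compl_unitSquare)
  · rintro ⟨x, y⟩ ⟨-, hy⟩
    by_cases hxy : (x, y) ∈ Icc (0 : ℝ) 1 ×ˢ Icc (0 : ℝ) 1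
    · exact Or.inl ⟨hxy.1, hy, hxy.2⟩
    · exact Or.inr hxy
  · rw [hμ.2.2 _ ((measurableSet_singleton a).inter measurableSet_Icc) inter_subset_right]
    exact measure_mono_null inter_subset_left Real.volume_singleton

theorem measure_Ioo_prod_Ioo (hμ : IsDoublyStochastic μ) (a b c d : ℝ) :
    μ (Ioo a b ×ˢ Ioo c d) = μ (Ioc a b ×ˢ Ioc c d) := by
  refine le_antisymm (measure_mono (prod_mono Ioo_subset_Ioc_self Ioo_subset_Ioc_self)) ?_
  have hsub : Ioc a b ×ˢ Ioc c d ⊆ Ioo a b ×ˢ Ioo c d ∪ ({b} ×ˢ univ ∪ univ ×ˢ {d}) := by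
    rintro ⟨x, y⟩ ⟨⟨hax, hxb⟩, hcy, hyd⟩
    rcases hxb.eq_or_lt with rfl | hxb
    · exact Or.inr (Or.inl ⟨rfl, trivial⟩)
    rcases hyd.eq_or_lt with rfl | hyd
    · exact Or.inr (Or.inr ⟨trivial, rfl⟩)
    exact Or.inl ⟨⟨hax, hxb⟩, hcy, hyd⟩
  calc μ (Ioc a b ×ˢ Ioc c d)
      ≤ μ (Ioo a b ×ˢ Ioo c d) + μ ({b} ×ˢ univ ∪ univ ×ˢ {d}) :=
        (measure_mono hsub).trans (measure_union_le _ _)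
    _ = μ (Ioo a b ×ˢ Ioo c d) := by
      rw [measure_union_null (hμ.measure_singleton_prod_univ b) (hμ.measure_univ_prod_singleton d),
        add_zero]

theorem of_map_eq (hμ : IsDoublyStochastic μ) {μ' : Measure (ℝ × ℝ)}
    (hfst : μ'.map Prod.fst = μ.map Prod.fst) (hsnd : μ'.map Prod.snd = μ.map Prod.snd) :
    IsDoublyStochastic μ' := by
  have := hμ.1
  have hI : MeasurableSet (Icc (0 : ℝ) 1)ᶜ := measurableSet_Icc.compl
  have hnull := hμ.measure_compl_unitSquare
  rw [compl_prod_eq_union, prod_univ, univ_prod, measure_union_null_iff] at hnull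
  have hμ₁ : μ' (Prod.fst ⁻¹' (Icc 0 1)ᶜ) = 0 := by
    rw [← Measure.map_apply measurable_fst hI, hfst, Measure.map_apply measurable_fst hI]
    exact hnull.1
  have hμ₂ : μ' (Prod.snd ⁻¹' (Icc 0 1)ᶜ) = 0 := by
    rw [← Measure.map_apply measurable_snd hI, hsnd, Measure.map_apply measurable_snd hI]
    exact hnull.2
  have : IsProbabilityMeasure (μ'.map Prod.fst) :=
    hfst ▸ Measure.isProbabilityMeasure_map measurable_fst.aemeasurable
  refine ⟨Measure.isProbabilityMeasure_of_map Prod.fst, fun B hB hBI => ?_, fun B hB hBI => ?_⟩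
  · rw [measure_prod_eq_map_fst hB hμ₂, hfst, ← measure_prod_eq_map_fst hB
      hnull.2, hμ.2.1 B hB hBI]
  · rw [measure_prod_eq_map_snd hB hμ₁, hsnd, ← measure_prod_eq_map_snd hB
      hnull.1, hμ.2.2 B hB hBI]

theorem integral_congr (hμ : IsDoublyStochastic μ) {F G : ℝ × ℝ → ℝ}
    (hFG : EqOn F G (Icc 0 1 ×ˢ Icc 0 1)) : ∫ p, F p ∂μ = ∫ p, G p ∂μ :=
  integral_congr_ae (Filter.Eventually.mono (mem_ae_iff.2 hμ.measure_compl_unitSquare) hFG)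

end IsDoublyStochastic

theorem add_lt_add_of_deriv_deriv_neg {F : ℝ × ℝ → ℝ} {x₁ x₂ y₁ y₂ : ℝ} (hx : x₁ < x₂)
    (hy : y₁ < y₂)
    (hF : ∀ x ∈ Icc x₁ x₂, ∀ y ∈ Icc y₁ y₂,
      DifferentiableAt ℝ (fun x' => F (x', y)) x ∧
      DifferentiableAt ℝ (fun y' => deriv (fun x' => F (x', y')) x) y ∧
      deriv (fun y' => deriv (fun x' => F (x', y')) x) y < 0) :
    F (x₁, y₁) + F (x₂, y₂) < F (x₁, y₂) + F (x₂, y₁) := by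
  have hy₁ : y₁ ∈ Icc y₁ y₂ := left_mem_Icc.2 hy.le
  have hy₂ : y₂ ∈ Icc y₁ y₂ := right_mem_Icc.2 hy.le
  have hderiv : ∀ x ∈ Icc x₁ x₂,
      deriv (fun x' => F (x', y₂)) x < deriv (fun x' => F (x', y₁)) x := fun x hx' =>
    strictAntiOn_of_deriv_neg (convex_Icc y₁ y₂)
      (fun y hy' => (hF x hx' y hy').2.1.continuousAt.continuousWithinAt)
      (fun y hy' => (hF x hx' y (interior_subset hy')).2.2) hy₁ hy₂ hy
  have hanti : StrictAntiOn (fun x => F (x, y₂) - F (x, y₁)) (Icc x₁ x₂) := by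
    refine strictAntiOn_of_deriv_neg (convex_Icc x₁ x₂) (fun x hx' =>
      ((hF x hx' y₂ hy₂).1.sub (hF x hx' y₁ hy₁).1).continuousAt.continuousWithinAt)
      fun x hx' => ?_
    have hx'' := interior_subset hx'
    rw [deriv_fun_sub (hF x hx'' y₂ hy₂).1 (hF x hx'' y₁ hy₁).1]
    exact sub_neg.2 (hderiv x hx'')
  linarith [hanti (left_mem_Icc.2 hx.le) (right_mem_Icc.2 hx.le) hx]

theorem measureReal_Ioc_prod_Ioc (μ : Measure (ℝ × ℝ)) [IsFiniteMeasure μ] {x₁ x₂ y₁ y₂ : ℝ}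
    (hx₁ : 0 ≤ x₁) (hx : x₁ ≤ x₂) (hy₁ : 0 ≤ y₁) (hy : y₁ ≤ y₂) :
    μ.real (Ioc x₁ x₂ ×ˢ Ioc y₁ y₂) =
      copulaOf μ x₂ y₂ - copulaOf μ x₁ y₂ - copulaOf μ x₂ y₁ + copulaOf μ x₁ y₁ := by
  set R : ℝ → ℝ → Set (ℝ × ℝ) := fun u v => Icc 0 u ×ˢ Icc 0 v
  have hR : ∀ u v, MeasurableSet (R u v) := fun _ _ => measurableSet_Icc.prod measurableSet_Icc
  have hdiff : Ioc x₁ x₂ ×ˢ Ioc y₁ y₂ = R x₂ y₂ \ (R x₁ y₂ ∪ R x₂ y₁) := by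
    ext ⟨x, y⟩
    simp only [R, mem_prod, mem_Icc, mem_Ioc, mem_sdiff, mem_union]
    grind
  have hinter : R x₁ y₂ ∩ R x₂ y₁ = R x₁ y₁ := by
    simp only [R, prod_inter_prod, Icc_inter_Icc, max_self, min_eq_left hx, min_eq_right hy]
  have hunion := measureReal_union_add_inter (μ := μ) (s := R x₁ y₂) (hR x₂ y₁)
  rw [hinter] at hunion
  rw [hdiff, measureReal_sdiff (union_subset (prod_mono (Icc_subset_Icc_right hx) subset_rfl)
    (prod_mono subset_rfl (Icc_subset_Icc_right hy))) ((hR _ _).union (hR _ _))]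
  simp only [copulaOf, ← measureReal_def]
  linarith

theorem IsDoublyStochastic.measure_eq_zero_or_of_integral_le {F : ℝ × ℝ → ℝ}
    (hF : ContinuousOn F (Icc 0 1 ×ˢ Icc 0 1)) {μ : Measure (ℝ × ℝ)} (hμ : IsDoublyStochastic μ)
    (hmax : ∀ ν : Measure (ℝ × ℝ), IsDoublyStochastic ν → ∫ p, F p ∂ν ≤ ∫ p, F p ∂μ)
    {A B : Set (ℝ × ℝ)} (hA : MeasurableSet A) (hB : MeasurableSet B)
    (hAB : ∀ p ∈ A, ∀ q ∈ B, F p + F q < F (p.1, q.2) + F (q.1, p.2)) :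
    μ A = 0 ∨ μ B = 0 := by
  set S : Set (ℝ × ℝ) := Icc 0 1 ×ˢ Icc 0 1
  have hS : MeasurableSet S := measurableSet_Icc.prod measurableSet_Icc
  have := hμ.1
  obtain ⟨C, hC⟩ := (isCompact_Icc.prod isCompact_Icc).exists_bound_of_continuousOn hF
  have hC₀ : 0 ≤ C := (norm_nonneg _).trans (hC 0 ⟨⟨le_rfl, zero_le_one⟩, le_rfl, zero_le_one⟩)
  set G : ℝ × ℝ → ℝ := S.indicator F
  have hFG : EqOn F G S := fun p hp => (indicator_of_mem hp F).symm
  have hG : Measurable G := by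
    classical
    rw [show G = S.piecewise F 0 from piecewise_eq_indicator.symm]
    exact hF.measurable_piecewise continuousOn_const hS
  have hGC : ∀ p, ‖G p‖ ≤ C := fun p => by
    by_cases hp : p ∈ S
    · rw [← hFG hp]; exact hC p hp
    · simpa [G, hp] using hC₀
  by_contra! h
  have hS' : ∀ E, μ (E ∩ S) = μ E := fun E => measure_inter_conull hμ.measure_compl_unitSquare
  obtain ⟨μ', hfst, hsnd, hlt⟩ := exists_map_eq_integral_lt μ (hA.inter hS) (hB.inter hS)
    (by rw [hS']; exact h.1) (by rw [hS']; exact h.2) hG hGC fun p hp q hq => by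
      rw [← hFG hp.2, ← hFG hq.2, ← @hFG (p.1, q.2) ⟨hp.2.1, hq.2.2⟩,
        ← @hFG (q.1, p.2) ⟨hq.2.1, hp.2.2⟩]
      exact hAB p hp.1 q hq.1
  have hμ' := hμ.of_map_eq hfst hsnd
  have hle := hmax μ' hμ'
  rw [hμ.integral_congr hFG, hμ'.integral_congr hFG] at hle
  exact hle.not_gt hlt

theorem stmt1_general (F : ℝ × ℝ → ℝ)
    (hFcont : ContinuousOn F (Icc (0:ℝ) 1 ×ˢ Icc (0:ℝ) 1))
    (μstar : Measure (ℝ × ℝ)) (hds : IsDoublyStochastic μstar)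
    (hmax : ∀ μ : Measure (ℝ × ℝ), IsDoublyStochastic μ →
      ∫ p, F p ∂μ ≤ ∫ p, F p ∂μstar)
    (C : ℝ → ℝ → ℝ) (hC : ∀ x y, C x y = copulaOf μstar x y)
    (X₁ X₂ Y₁ Y₂ : ℝ)
    (hX₁ : 0 ≤ X₁) (hY₁ : 0 ≤ Y₁)
    (hD2 : ∀ x y, x ∈ Ioo X₁ X₂ → y ∈ Ioo Y₁ Y₂ →
      DifferentiableAt ℝ (fun x' => F (x', y)) x ∧
      DifferentiableAt ℝ (fun y' => deriv (fun x' => F (x', y')) x) y ∧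
      deriv (fun y' => deriv (fun x' => F (x', y')) x) y < 0) :
    ∀ x ∈ Icc X₁ X₂, ∀ y ∈ Icc Y₁ Y₂,
      C x y = max (C x Y₂ + C X₂ y - C X₂ Y₂) (C x Y₁ + C X₁ y - C X₁ Y₁) := by
  intro x hx y hy
  obtain rfl : C = copulaOf μstar := funext₂ hC
  have := hds.1
  have hsub : ∀ p ∈ Ioc X₁ x ×ˢ Ioc Y₁ y, ∀ q ∈ Ioo x X₂ ×ˢ Ioo y Y₂,
      F p + F q < F (p.1, q.2) + F (q.1, p.2) := by
    rintro p ⟨⟨hp₁, hpx⟩, hp₂, hpy⟩ q ⟨⟨hxq, hq₁⟩, hyq, hq₂⟩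
    exact add_lt_add_of_deriv_deriv_neg (hpx.trans_lt hxq) (hpy.trans_lt hyq) fun u hu v hv =>
      hD2 u v ⟨hp₁.trans_le hu.1, hu.2.trans_lt hq₁⟩ ⟨hp₂.trans_le hv.1, hv.2.trans_lt hq₂⟩
  have hnull := hds.measure_eq_zero_or_of_integral_le hFcont hmax
    (measurableSet_Ioc.prod measurableSet_Ioc) (measurableSet_Ioo.prod measurableSet_Ioo) hsub
  rw [hds.measure_Ioo_prod_Ioo] at hnull
  have hlow := measureReal_Ioc_prod_Ioc μstar hX₁ hx.1 hY₁ hy.1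
  have hupp := measureReal_Ioc_prod_Ioc μstar (hX₁.trans hx.1) hx.2 (hY₁.trans hy.1) hy.2
  rcases hnull with h | h
  · rw [measureReal_def, h, ENNReal.toReal_zero] at hlow
    rw [max_eq_right (by linarith [measureReal_nonneg (μ := μstar) (s := Ioc x X₂ ×ˢ Ioc y Y₂)])]
    linarith
  · rw [measureReal_def, h, ENNReal.toReal_zero] at hupp
    rw [max_eq_left (by linarith [measureReal_nonneg (μ := μstar) (s := Ioc X₁ x ×ˢ Ioc Y₁ y)])]
    linarith

theorem stmt1 (F : ℝ × ℝ → ℝ)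
    (hFcont : ContinuousOn F (Icc (0:ℝ) 1 ×ˢ Icc (0:ℝ) 1))
    (μstar : Measure (ℝ × ℝ)) (hds : IsDoublyStochastic μstar)
    (hmax : ∀ μ : Measure (ℝ × ℝ), IsDoublyStochastic μ →
      ∫ p, F p ∂μ ≤ ∫ p, F p ∂μstar)
    (C : ℝ → ℝ → ℝ) (hC : ∀ x y, C x y = copulaOf μstar x y)
    (X₁ X₂ Y₁ Y₂ : ℝ)
    (hX₁ : 0 ≤ X₁) (hX : X₁ ≤ X₂) (hX₂ : X₂ ≤ 1)
    (hY₁ : 0 ≤ Y₁) (hY : Y₁ ≤ Y₂) (hY₂ : Y₂ ≤ 1)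
    (hrect : C X₂ Y₂ + C X₁ Y₁ - C X₁ Y₂ - C X₂ Y₁ > 0)
    (hD2 : ∀ x y, x ∈ Ioo X₁ X₂ → y ∈ Ioo Y₁ Y₂ →
      DifferentiableAt ℝ (fun x' => F (x', y)) x ∧
      DifferentiableAt ℝ (fun y' => deriv (fun x' => F (x', y')) x) y ∧
      deriv (fun y' => deriv (fun x' => F (x', y')) x) y < 0) :
    ∀ x ∈ Icc X₁ X₂, ∀ y ∈ Icc Y₁ Y₂,
      C x y = max (C x Y₂ + C X₂ y - C X₂ Y₂) (C x Y₁ + C X₁ y - C X₁ Y₁) :=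
  stmt1_general F hFcont μstar hds hmax C hC X₁ X₂ Y₁ Y₂ hX₁ hY₁ hD2
end

section
/- Let 0 < x₁ < x₂ < 1 and let h₁, h₂ : [0,1] → ℝ be continuously differentiable with h₁(0) = h₂(0) = 0, h₁(1) = x₁, h₂(1) = x₂, and 0 ≤ h₁'(y) ≤ h₂'(y) ≤ 1 for all y ∈ [0,1]. Define C(x,y) = min(x, h₁(y)) for x ∈ [0,x₁], C(x,y) = max(x + h₂(y) − x₂, h₁(y)) for x ∈ [x₁,x₂], C(x,y) = min(x − x₂ + h₂(y), y) for x ∈ [x₂,1]. Let μ be a doubly stochastic measure on [0,1]² with μ([0,x]×[0,y]) = C(x,y) for all (x,y) ∈ [0,1]². Then for every continuous F : [0,1]² → ℝ, ∫ F dμ = ∫₀¹ [ F(h₁(y), y)·h₁'(y) + F(x₂ − h₂(y) + h₁(y), y)·(h₂'(y) − h₁'(y)) + F(x₂ − h₂(y) + y, y)·(1 − h₂'(y)) ] dy. -/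
/-!
Since `μ` is concentrated on the unit square, it is determined by the masses `C(a,b)` of the
rectangles `[0,a] × [0,b]`. The right-hand side is the integral against the sum `ν` of the images
of `h₁' y dy`, `(h₂' y - h₁' y) dy` and `(1 - h₂' y) dy` on `[0,1]` under the curves
`y ↦ (h₁ y, y)`, `y ↦ (x₂ - h₂ y + h₁ y, y)` and `y ↦ (x₂ - h₂ y + y, y)`. Each weight is `|G'|`
for the first coordinate `G` of its curve, and `G` is monotone, so by the fundamental theorem of
calculus the curve puts on `[0,a] × [0,b]` the length of the part of the interval between `G 0`
and `G b` that lies left of `a`. These three lengths add up to `C(a,b)`, hence `μ = ν`.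
-/

open MeasureTheory Set

section
variable {g g' : ℝ → ℝ} {l r : ℝ}

lemma monotoneOn_Icc_of_hasDerivWithinAt_nonneg
    (hderiv : ∀ x ∈ Icc l r, HasDerivWithinAt g (g' x) (Icc l r) x)
    (hpos : ∀ x ∈ Icc l r, 0 ≤ g' x) : MonotoneOn g (Icc l r) :=
  monotoneOn_of_hasDerivWithinAt_nonneg (convex_Icc l r)
    (fun x hx => (hderiv x hx).continuousWithinAt)
    (fun x hx => (hderiv x (interior_subset hx)).mono interior_subset)
    (fun x hx => hpos x (interior_subset hx))

lemma antitoneOn_Icc_of_hasDerivWithinAt_neg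
    (hderiv : ∀ x ∈ Icc l r, HasDerivWithinAt g (-g' x) (Icc l r) x)
    (hpos : ∀ x ∈ Icc l r, 0 ≤ g' x) : AntitoneOn g (Icc l r) :=
  antitoneOn_of_hasDerivWithinAt_nonpos (convex_Icc l r)
    (fun x hx => (hderiv x hx).continuousWithinAt)
    (fun x hx => (hderiv x (interior_subset hx)).mono interior_subset)
    (fun x hx => neg_nonpos.2 (hpos x (interior_subset hx)))

lemma integral_setOf_le_of_hasDerivWithinAt_nonneg (hlr : l ≤ r)
    (hderiv : ∀ x ∈ Icc l r, HasDerivWithinAt g (g' x) (Icc l r) x)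
    (hpos : ∀ x ∈ Icc l r, 0 ≤ g' x) (a : ℝ) :
    ∫ x in {x ∈ Icc l r | g x ≤ a}, g' x = min (g r) (max a (g l)) - g l := by
  have hcont : ContinuousOn g (Icc l r) := fun x hx => (hderiv x hx).continuousWithinAt
  have hmono := monotoneOn_Icc_of_hasDerivWithinAt_nonneg hderiv hpos
  have ftc : ∀ c ∈ Icc l r, ∫ x in Icc l c, g' x = g c - g l := by
    intro c hc
    have hcont' : ContinuousOn g (Icc l c) := hcont.mono (Icc_subset_Icc_right hc.2)
    have hderiv' : ∀ x ∈ Ioo l c, HasDerivWithinAt g (g' x) (Ioi x) x := fun x hx =>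
      ((hderiv x ⟨hx.1.le, hx.2.le.trans hc.2⟩).hasDerivAt
        (Icc_mem_nhds hx.1 (hx.2.trans_le hc.2))).hasDerivWithinAt
    rw [integral_Icc_eq_integral_Ioc, ← intervalIntegral.integral_of_le hc.1]
    exact intervalIntegral.integral_eq_sub_of_hasDeriv_right_of_le hc.1 hcont' hderiv'
      ((intervalIntegrable_iff_integrableOn_Ioc_of_le hc.1).2
        (intervalIntegral.integrableOn_deriv_right_of_nonneg hcont' hderiv'
          fun x hx => hpos x ⟨hx.1.le, hx.2.le.trans hc.2⟩))
  have hl : l ∈ Icc l r := left_mem_Icc.2 hlr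
  have hr : r ∈ Icc l r := right_mem_Icc.2 hlr
  rcases lt_or_ge a (g l) with ha | ha
  · have hempty : {x ∈ Icc l r | g x ≤ a} = ∅ :=
      eq_empty_of_forall_notMem fun x hx => (ha.trans_le (hmono hl hx.1 hx.1.1)).not_ge hx.2
    rw [hempty, max_eq_right ha.le, min_eq_right (hmono hl hr hlr)]
    simp
  set S := {x ∈ Icc l r | g x ≤ a}
  have hS : IsCompact S := isCompact_Icc.of_isClosed_subset
    (hcont.preimage_isClosed_of_isClosed isClosed_Icc isClosed_Iic) fun x hx => hx.1
  have hc : sSup S ∈ S := hS.sSup_mem ⟨l, hl, ha⟩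
  have hle : ∀ x ∈ S, x ≤ sSup S := fun x hx => le_csSup hS.bddAbove hx
  have hSc : S = Icc l (sSup S) := by
    refine Subset.antisymm (fun x hx => ⟨hx.1.1, hle x hx⟩) fun x hx => ?_
    have hxr : x ∈ Icc l r := ⟨hx.1, hx.2.trans hc.1.2⟩
    exact ⟨hxr, (hmono hxr hc.1 hx.2).trans hc.2⟩
  -- `S` ends at `r`, or at the last point where `g` takes the value `a`
  have hgc : g (sSup S) = min (g r) a := by
    rcases le_or_gt (g r) a with hra | hra
    · rw [le_antisymm hc.1.2 (hle r ⟨hr, hra⟩), min_eq_left hra]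
    · obtain ⟨d, hd, hgd⟩ := intermediate_value_Icc hc.1.2
        (hcont.mono (Icc_subset_Icc_left hc.1.1)) ⟨hc.2, hra.le⟩
      have hdc : d = sSup S := le_antisymm (hle d ⟨⟨hc.1.1.trans hd.1, hd.2⟩, hgd.le⟩) hd.1
      rw [← hdc, hgd, min_eq_right hra.le]
  rw [hSc, ftc _ hc.1, hgc, max_eq_left ha]

lemma integral_setOf_le_of_hasDerivWithinAt_neg (hlr : l ≤ r)
    (hderiv : ∀ x ∈ Icc l r, HasDerivWithinAt g (-g' x) (Icc l r) x)
    (hpos : ∀ x ∈ Icc l r, 0 ≤ g' x) (a : ℝ) :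
    ∫ x in {x ∈ Icc l r | g x ≤ a}, g' x = min (g l) (max a (g r)) - g r := by
  have hrefl : MapsTo (l + r - ·) (Icc l r) (Icc l r) := fun x hx =>
    ⟨by linarith [hx.2], by linarith [hx.1]⟩
  have key := integral_setOf_le_of_hasDerivWithinAt_nonneg (g := fun x => g (l + r - x))
    (g' := fun x => g' (l + r - x)) hlr
    (fun x hx => by
      simpa [Function.comp_def] using (hderiv _ (hrefl hx)).scomp x
        ((hasDerivWithinAt_id x _).const_sub (l + r)) hrefl)
    (fun x hx => hpos _ (hrefl hx)) a
  have hpre : (l + r - ·) ⁻¹' {x ∈ Icc l r | g x ≤ a} = {x ∈ Icc l r | g (l + r - x) ≤ a} := by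
    ext x
    simp only [mem_preimage, mem_ofPred_eq, mem_Icc]
    constructor <;> rintro ⟨⟨h1, h2⟩, h3⟩ <;> exact ⟨⟨by linarith, by linarith⟩, h3⟩
  simp only [add_sub_cancel_left, add_sub_cancel_right] at key
  rw [← key, ← hpre, (Measure.measurePreserving_sub_left volume (l + r)).setIntegral_preimage_emb
    (measurableEmbedding_subLeft _)]

end

section
variable {s : Set ℝ} {G W : ℝ → ℝ}

noncomputable def graphMeasure (s : Set ℝ) (G W : ℝ → ℝ) : Measure (ℝ × ℝ) :=
  ((volume.restrict s).withDensity fun y => ENNReal.ofReal (W y)).map fun y => (G y, y)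

lemma aemeasurable_graph (hs : MeasurableSet s) (hG : ContinuousOn G s) :
    AEMeasurable (fun y => (G y, y)) ((volume.restrict s).withDensity fun y => ENNReal.ofReal (W y)) :=
  ((hG.aemeasurable hs).prodMk aemeasurable_id).mono_ac (withDensity_absolutelyContinuous _ _)

lemma graphMeasure_apply (hs : MeasurableSet s) (hG : ContinuousOn G s) (hW : IntegrableOn W s)
    (hW0 : ∀ y ∈ s, 0 ≤ W y) {t : Set (ℝ × ℝ)} (ht : MeasurableSet t) :
    graphMeasure s G W t = ENNReal.ofReal (∫ y in (fun y => (G y, y)) ⁻¹' t ∩ s, W y) := by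
  rw [graphMeasure, Measure.map_apply_of_aemeasurable (aemeasurable_graph hs hG) ht,
    withDensity_apply', Measure.restrict_restrict' hs, ofReal_integral_eq_lintegral_ofReal
      (hW.mono_set inter_subset_right)
      (ae_restrict_of_ae_restrict_of_subset inter_subset_right (ae_restrict_of_forall_mem hs hW0))]

lemma graphMeasure_compl_eq_zero (hs : MeasurableSet s) (hG : ContinuousOn G s)
    {t : Set (ℝ × ℝ)} (ht : MeasurableSet t) (hmaps : ∀ y ∈ s, (G y, y) ∈ t) :
    graphMeasure s G W tᶜ = 0 := by
  rw [graphMeasure, Measure.map_apply_of_aemeasurable (aemeasurable_graph hs hG) ht.compl]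
  refine withDensity_absolutelyContinuous _ _ ?_
  have hempty : (fun y => (G y, y)) ⁻¹' tᶜ ∩ s = ∅ :=
    eq_empty_of_forall_notMem fun y hy => hy.1 (hmaps y hy.2)
  rw [Measure.restrict_apply' hs, hempty, measure_empty]

lemma isFiniteMeasure_graphMeasure (hW : IntegrableOn W s) :
    IsFiniteMeasure (graphMeasure s G W) :=
  have := isFiniteMeasure_withDensity_ofReal hW.2
  Measure.isFiniteMeasure_map _ _

lemma integral_graphMeasure (hs : MeasurableSet s) (hG : ContinuousOn G s)
    (hW : AEMeasurable W (volume.restrict s)) (hW0 : ∀ y ∈ s, 0 ≤ W y) {F : ℝ × ℝ → ℝ}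
    (hF : AEStronglyMeasurable F (graphMeasure s G W)) :
    ∫ p, F p ∂graphMeasure s G W = ∫ y in s, W y * F (G y, y) := by
  rw [graphMeasure, integral_map (aemeasurable_graph hs hG) hF,
    integral_withDensity_eq_integral_toReal_smul₀ hW.ennreal_ofReal
      (ae_of_all _ fun _ => ENNReal.ofReal_lt_top)]
  refine setIntegral_congr_fun hs fun y hy => ?_
  simp only [ENNReal.toReal_ofReal (hW0 y hy), smul_eq_mul]

end

lemma ContinuousOn.integrable_of_measure_compl_eq_zero {X E : Type*} [TopologicalSpace X]
    [MeasurableSpace X] [OpensMeasurableSpace X] [T2Space X] [NormedAddCommGroup E]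
    {μ : Measure X} [IsFiniteMeasure μ] {K : Set X} {F : X → E} (hF : ContinuousOn F K)
    (hK : IsCompact K) (hμ : μ Kᶜ = 0) : Integrable F μ := by
  rw [← Measure.restrict_eq_self_of_ae_mem (mem_ae_iff.2 hμ)]
  exact hF.integrableOn_compact hK

lemma ext_of_Iic_prod_Iic {μ ν : Measure (ℝ × ℝ)} [IsFiniteMeasure μ]
    (h_univ : μ univ = ν univ) (h : ∀ a b : ℝ, μ (Iic a ×ˢ Iic b) = ν (Iic a ×ˢ Iic b)) :
    μ = ν := by
  have hgen : MeasurableSpace.generateFrom (range (Iic : ℝ → Set ℝ)) = Real.measurableSpace :=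
    (borel_eq_generateFrom_Iic ℝ).symm.trans (BorelSpace.measurable_eq (α := ℝ)).symm
  have hspan : IsCountablySpanning (range (Iic : ℝ → Set ℝ)) :=
    ⟨fun n : ℕ => Iic (n : ℝ), fun n => mem_range_self _,
      iUnion_eq_univ_iff.2 fun x => ⟨⌈x⌉₊, Nat.le_ceil x⟩⟩
  refine ext_of_generate_finite _ (generateFrom_eq_prod hgen hgen hspan hspan).symm
    (isPiSystem_Iic.prod isPiSystem_Iic) ?_ h_univ
  rintro _ ⟨_, ⟨a, rfl⟩, _, ⟨b, rfl⟩, rfl⟩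
  exact h a b

lemma ext_of_Icc_prod_Icc_of_measure_compl_eq_zero {μ ν : Measure (ℝ × ℝ)} [IsFiniteMeasure μ]
    (hμ : μ (Icc 0 1 ×ˢ Icc 0 1)ᶜ = 0) (hν : ν (Icc 0 1 ×ˢ Icc 0 1)ᶜ = 0)
    (h : ∀ a ∈ Icc (0:ℝ) 1, ∀ b ∈ Icc (0:ℝ) 1,
      μ (Icc 0 a ×ˢ Icc 0 b) = ν (Icc 0 a ×ˢ Icc 0 b)) : μ = ν := by
  have hIic : ∀ m : Measure (ℝ × ℝ), m (Icc 0 1 ×ˢ Icc 0 1)ᶜ = 0 → ∀ a b : ℝ,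
      m (Iic a ×ˢ Iic b) = m (Icc 0 (min a 1) ×ˢ Icc 0 (min b 1)) := by
    intro m hm a b
    rw [← measure_inter_conull hm, prod_inter_prod]
    congr 2 <;> ext x <;> simp only [mem_inter_iff, mem_Iic, mem_Icc, le_min_iff] <;> tauto
  have h' : ∀ a b : ℝ, μ (Icc 0 (min a 1) ×ˢ Icc 0 (min b 1)) =
      ν (Icc 0 (min a 1) ×ˢ Icc 0 (min b 1)) := by
    intro a b
    rcases lt_or_ge (min a 1) 0 with ha | ha
    · simp [Icc_eq_empty_of_lt ha]
    rcases lt_or_ge (min b 1) 0 with hb | hb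
    · simp [Icc_eq_empty_of_lt hb]
    exact h _ ⟨ha, min_le_right _ _⟩ _ ⟨hb, min_le_right _ _⟩
  refine ext_of_Iic_prod_Iic ?_ fun a b => by rw [hIic μ hμ, hIic ν hν, h']
  rw [← measure_inter_conull hμ, ← measure_inter_conull hν, univ_inter]
  exact h 1 (right_mem_Icc.2 zero_le_one) 1 (right_mem_Icc.2 zero_le_one)

lemma IsDoublyStochastic.measure_compl_Icc_prod_Icc {μ : Measure (ℝ × ℝ)}
    (hμ : IsDoublyStochastic μ) : μ (Icc 0 1 ×ˢ Icc 0 1)ᶜ = 0 := by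
  have := hμ.1
  rw [prob_compl_eq_zero_iff (measurableSet_Icc.prod measurableSet_Icc),
    hμ.2.2 _ measurableSet_Icc subset_rfl, Real.volume_Icc, sub_zero, ENNReal.ofReal_one]

structure IsGraphPiece (G W : ℝ → ℝ) : Prop where
  continuousOn : ContinuousOn G (Icc 0 1)
  mapsTo : MapsTo G (Icc 0 1) (Icc 0 1)
  continuousOn_weight : ContinuousOn W (Icc 0 1)
  weight_nonneg : ∀ y ∈ Icc (0:ℝ) 1, 0 ≤ W y

namespace IsGraphPiece

variable {G W : ℝ → ℝ} {F : ℝ × ℝ → ℝ}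

lemma integrableOn_weight (P : IsGraphPiece G W) : IntegrableOn W (Icc 0 1) :=
  P.continuousOn_weight.integrableOn_compact isCompact_Icc

lemma isFiniteMeasure (P : IsGraphPiece G W) : IsFiniteMeasure (graphMeasure (Icc 0 1) G W) :=
  isFiniteMeasure_graphMeasure P.integrableOn_weight

lemma measure_compl (P : IsGraphPiece G W) :
    graphMeasure (Icc 0 1) G W (Icc 0 1 ×ˢ Icc 0 1)ᶜ = 0 :=
  graphMeasure_compl_eq_zero measurableSet_Icc P.continuousOn
    (measurableSet_Icc.prod measurableSet_Icc) fun _ hy => ⟨P.mapsTo hy, hy⟩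

lemma integrable (P : IsGraphPiece G W) (hF : ContinuousOn F (Icc 0 1 ×ˢ Icc 0 1)) :
    Integrable F (graphMeasure (Icc 0 1) G W) :=
  have := P.isFiniteMeasure
  hF.integrable_of_measure_compl_eq_zero (isCompact_Icc.prod isCompact_Icc) P.measure_compl

lemma integrableOn_mul (P : IsGraphPiece G W) (hF : ContinuousOn F (Icc 0 1 ×ˢ Icc 0 1)) :
    IntegrableOn (fun y => W y * F (G y, y)) (Icc 0 1) :=
  (P.continuousOn_weight.mul (hF.comp (P.continuousOn.prodMk continuousOn_id)
    fun _ hy => ⟨P.mapsTo hy, hy⟩)).integrableOn_compact isCompact_Icc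

lemma integral (P : IsGraphPiece G W) (hF : ContinuousOn F (Icc 0 1 ×ˢ Icc 0 1)) :
    ∫ p, F p ∂graphMeasure (Icc 0 1) G W = ∫ y in Icc 0 1, W y * F (G y, y) :=
  integral_graphMeasure measurableSet_Icc P.continuousOn P.integrableOn_weight.aemeasurable
    P.weight_nonneg (P.integrable hF).aestronglyMeasurable

lemma measure_Icc_prod_Icc (P : IsGraphPiece G W) (a : ℝ) {b : ℝ} (hb : b ≤ 1) :
    graphMeasure (Icc 0 1) G W (Icc 0 a ×ˢ Icc 0 b) =
      ENNReal.ofReal (∫ y in {y ∈ Icc 0 b | G y ≤ a}, W y) := by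
  rw [graphMeasure_apply measurableSet_Icc P.continuousOn P.integrableOn_weight P.weight_nonneg
    (measurableSet_Icc.prod measurableSet_Icc)]
  congr 3
  ext y
  simp only [mem_inter_iff, mem_preimage, mem_prod, mem_Icc, mem_ofPred_eq]
  constructor
  · rintro ⟨⟨⟨-, hGa⟩, hyb⟩, -⟩
    exact ⟨hyb, hGa⟩
  · rintro ⟨hyb, hGa⟩
    exact ⟨⟨⟨(P.mapsTo ⟨hyb.1, hyb.2.trans hb⟩).1, hGa⟩, hyb⟩, hyb.1, hyb.2.trans hb⟩

lemma measure_Icc_prod_Icc_of_hasDerivWithinAt (P : IsGraphPiece G W)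
    (hderiv : ∀ y ∈ Icc (0:ℝ) 1, HasDerivWithinAt G (W y) (Icc 0 1) y) (a : ℝ) {b : ℝ}
    (hb : b ∈ Icc (0:ℝ) 1) :
    graphMeasure (Icc 0 1) G W (Icc 0 a ×ˢ Icc 0 b) =
      ENNReal.ofReal (min (G b) (max a (G 0)) - G 0) := by
  have hsub : Icc 0 b ⊆ Icc 0 1 := Icc_subset_Icc_right hb.2
  rw [P.measure_Icc_prod_Icc a hb.2, integral_setOf_le_of_hasDerivWithinAt_nonneg hb.1
    (fun y hy => (hderiv y (hsub hy)).mono hsub) (fun y hy => P.weight_nonneg y (hsub hy))]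

lemma measure_Icc_prod_Icc_of_hasDerivWithinAt_neg (P : IsGraphPiece G W)
    (hderiv : ∀ y ∈ Icc (0:ℝ) 1, HasDerivWithinAt G (-W y) (Icc 0 1) y) (a : ℝ) {b : ℝ}
    (hb : b ∈ Icc (0:ℝ) 1) :
    graphMeasure (Icc 0 1) G W (Icc 0 a ×ˢ Icc 0 b) =
      ENNReal.ofReal (min (G 0) (max a (G b)) - G b) := by
  have hsub : Icc 0 b ⊆ Icc 0 1 := Icc_subset_Icc_right hb.2
  rw [P.measure_Icc_prod_Icc a hb.2, integral_setOf_le_of_hasDerivWithinAt_neg hb.1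
    (fun y hy => (hderiv y (hsub hy)).mono hsub) (fun y hy => P.weight_nonneg y (hsub hy))]

end IsGraphPiece

lemma integral_add_add_graphMeasure {G₁ G₂ G₃ W₁ W₂ W₃ : ℝ → ℝ} {F : ℝ × ℝ → ℝ}
    (P₁ : IsGraphPiece G₁ W₁) (P₂ : IsGraphPiece G₂ W₂) (P₃ : IsGraphPiece G₃ W₃)
    (hF : ContinuousOn F (Icc 0 1 ×ˢ Icc 0 1)) :
    ∫ p, F p ∂(graphMeasure (Icc 0 1) G₁ W₁ + graphMeasure (Icc 0 1) G₂ W₂ +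
        graphMeasure (Icc 0 1) G₃ W₃) =
      ∫ y in (0:ℝ)..1, (F (G₁ y, y) * W₁ y + F (G₂ y, y) * W₂ y + F (G₃ y, y) * W₃ y) := by
  have := P₁.isFiniteMeasure
  have := P₂.isFiniteMeasure
  have := P₃.isFiniteMeasure
  rw [integral_add_measure ((P₁.integrable hF).add_measure (P₂.integrable hF)) (P₃.integrable hF),
    integral_add_measure (P₁.integrable hF) (P₂.integrable hF), P₁.integral hF, P₂.integral hF,
    P₃.integral hF, intervalIntegral.integral_of_le zero_le_one, ← integral_Icc_eq_integral_Ioc,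
    ← integral_add (P₁.integrableOn_mul hF) (P₂.integrableOn_mul hF),
    ← integral_add _ (P₃.integrableOn_mul hF)]
  · exact setIntegral_congr_fun measurableSet_Icc fun y _ => by ring
  · exact (P₁.integrableOn_mul hF).add (P₂.integrableOn_mul hF)

lemma ofReal_eq_add_of_piecewise {x₁ x₂ a b p q m : ℝ} (ha : a ∈ Icc (0:ℝ) 1)
    (hp : p ∈ Icc 0 x₁) (hq : x₂ - q + p ∈ Icc x₁ x₂) (hb : x₂ - q + b ∈ Icc x₂ 1)
    (h₁ : a ∈ Icc 0 x₁ → m = min a p) (h₂ : a ∈ Icc x₁ x₂ → m = max (a + q - x₂) p)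
    (h₃ : a ∈ Icc x₂ 1 → m = min (a - x₂ + q) b) :
    ENNReal.ofReal m = ENNReal.ofReal (min p (max a 0)) +
      ENNReal.ofReal (min x₂ (max a (x₂ - q + p)) - (x₂ - q + p)) +
      ENNReal.ofReal (min (x₂ - q + b) (max a x₂) - x₂) := by
  have hm : (a ≤ x₁ ∧ m = min a p) ∨ (x₁ ≤ a ∧ a ≤ x₂ ∧ m = max (a + q - x₂) p) ∨
      (x₂ ≤ a ∧ m = min (a - x₂ + q) b) := by
    rcases le_total a x₁ with ha₁ | ha₁
    · exact .inl ⟨ha₁, h₁ ⟨ha.1, ha₁⟩⟩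
    rcases le_total a x₂ with ha₂ | ha₂
    · exact .inr (.inl ⟨ha₁, ha₂, h₂ ⟨ha₁, ha₂⟩⟩)
    · exact .inr (.inr ⟨ha₂, h₃ ⟨ha₂, ha.2⟩⟩)
  have n₁ : 0 ≤ min p (max a 0) := le_min hp.1 (le_max_right _ _)
  have n₂ : 0 ≤ min x₂ (max a (x₂ - q + p)) - (x₂ - q + p) :=
    sub_nonneg.2 (le_min hq.2 (le_max_right _ _))
  have n₃ : 0 ≤ min (x₂ - q + b) (max a x₂) - x₂ := sub_nonneg.2 (le_min hb.1 (le_max_right _ _))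
  rw [← ENNReal.ofReal_add n₁ n₂, ← ENNReal.ofReal_add (add_nonneg n₁ n₂) n₃]
  congr 1
  rcases hm with ⟨ha₁, rfl⟩ | ⟨ha₁, ha₂, rfl⟩ | ⟨ha₂, rfl⟩ <;> simp only [min_def, max_def] <;>
    split_ifs <;> linarith [ha.1, ha.2, hp.1, hp.2, hq.1, hq.2, hb.1, hb.2]

theorem stmt7 (x₁ x₂ : ℝ) (hx₁ : 0 < x₁) (hx₁₂ : x₁ < x₂) (hx₂ : x₂ < 1)
    (h₁ h₂ h₁' h₂' : ℝ → ℝ)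
    (hd₁ : ∀ y ∈ Icc (0:ℝ) 1, HasDerivWithinAt h₁ (h₁' y) (Icc 0 1) y)
    (hd₂ : ∀ y ∈ Icc (0:ℝ) 1, HasDerivWithinAt h₂ (h₂' y) (Icc 0 1) y)
    (hc₁ : ContinuousOn h₁' (Icc (0:ℝ) 1)) (hc₂ : ContinuousOn h₂' (Icc (0:ℝ) 1))
    (hh₁0 : h₁ 0 = 0) (hh₂0 : h₂ 0 = 0) (hh₁1 : h₁ 1 = x₁) (hh₂1 : h₂ 1 = x₂)
    (hbound : ∀ y ∈ Icc (0:ℝ) 1, 0 ≤ h₁' y ∧ h₁' y ≤ h₂' y ∧ h₂' y ≤ 1)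
    (μ : Measure (ℝ × ℝ)) (hds : IsDoublyStochastic μ)
    (hdist : ∀ x ∈ Icc (0:ℝ) 1, ∀ y ∈ Icc (0:ℝ) 1,
      (x ∈ Icc 0 x₁ → (μ (Icc 0 x ×ˢ Icc 0 y)).toReal = min x (h₁ y)) ∧
      (x ∈ Icc x₁ x₂ → (μ (Icc 0 x ×ˢ Icc 0 y)).toReal = max (x + h₂ y - x₂) (h₁ y)) ∧
      (x ∈ Icc x₂ 1 → (μ (Icc 0 x ×ˢ Icc 0 y)).toReal = min (x - x₂ + h₂ y) y)) :
    ∀ F : ℝ × ℝ → ℝ, ContinuousOn F (Icc (0:ℝ) 1 ×ˢ Icc (0:ℝ) 1) →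
      ∫ p, F p ∂μ =
        ∫ y in (0:ℝ)..1,
          (F (h₁ y, y) * h₁' y +
           F (x₂ - h₂ y + h₁ y, y) * (h₂' y - h₁' y) +
           F (x₂ - h₂ y + y, y) * (1 - h₂' y)) := by
  intro F hF
  set G₂ : ℝ → ℝ := fun y => x₂ - h₂ y + h₁ y
  set G₃ : ℝ → ℝ := fun y => x₂ - h₂ y + y
  have hd₂₁ : ∀ y ∈ Icc (0:ℝ) 1, HasDerivWithinAt G₂ (-(h₂' y - h₁' y)) (Icc 0 1) y :=
    fun y hy => (((hd₂ y hy).const_sub x₂).add (hd₁ y hy)).congr_deriv (by ring)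
  have hd₃ : ∀ y ∈ Icc (0:ℝ) 1, HasDerivWithinAt G₃ (1 - h₂' y) (Icc 0 1) y :=
    fun y hy => (((hd₂ y hy).const_sub x₂).add (hasDerivWithinAt_id y _)).congr_deriv (by ring)
  have hw₁ : ∀ y ∈ Icc (0:ℝ) 1, 0 ≤ h₁' y := fun y hy => (hbound y hy).1
  have hw₂ : ∀ y ∈ Icc (0:ℝ) 1, 0 ≤ h₂' y - h₁' y := fun y hy => sub_nonneg.2 (hbound y hy).2.1
  have hw₃ : ∀ y ∈ Icc (0:ℝ) 1, 0 ≤ 1 - h₂' y := fun y hy => sub_nonneg.2 (hbound y hy).2.2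
  have hm₁ : MapsTo h₁ (Icc 0 1) (Icc 0 x₁) := by
    simpa only [hh₁0, hh₁1] using (monotoneOn_Icc_of_hasDerivWithinAt_nonneg hd₁ hw₁).mapsTo_Icc
  have hm₂ : MapsTo G₂ (Icc 0 1) (Icc x₁ x₂) := by
    simpa [G₂, hh₁0, hh₂0, hh₁1, hh₂1] using
      (antitoneOn_Icc_of_hasDerivWithinAt_neg hd₂₁ hw₂).mapsTo_Icc
  have hm₃ : MapsTo G₃ (Icc 0 1) (Icc x₂ 1) := by
    simpa [G₃, hh₂0, hh₂1] using (monotoneOn_Icc_of_hasDerivWithinAt_nonneg hd₃ hw₃).mapsTo_Icc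
  have P₁ : IsGraphPiece h₁ h₁' := ⟨fun y hy => (hd₁ y hy).continuousWithinAt,
    hm₁.mono_right (Icc_subset_Icc le_rfl (by linarith)), hc₁, hw₁⟩
  have P₂ : IsGraphPiece G₂ (fun y => h₂' y - h₁' y) := ⟨fun y hy => (hd₂₁ y hy).continuousWithinAt,
    hm₂.mono_right (Icc_subset_Icc hx₁.le hx₂.le), hc₂.sub hc₁, hw₂⟩
  have P₃ : IsGraphPiece G₃ (fun y => 1 - h₂' y) := ⟨fun y hy => (hd₃ y hy).continuousWithinAt,
    hm₃.mono_right (Icc_subset_Icc (by linarith) le_rfl), continuousOn_const.sub hc₂, hw₃⟩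
  have hμν : μ = graphMeasure (Icc 0 1) h₁ h₁' + graphMeasure (Icc 0 1) G₂ (fun y => h₂' y - h₁' y)
      + graphMeasure (Icc 0 1) G₃ (fun y => 1 - h₂' y) := by
    have := hds.1
    refine ext_of_Icc_prod_Icc_of_measure_compl_eq_zero hds.measure_compl_Icc_prod_Icc
      (by rw [Measure.add_apply, Measure.add_apply, P₁.measure_compl, P₂.measure_compl,
        P₃.measure_compl, add_zero, add_zero]) fun a ha b hb => ?_
    obtain ⟨c₁, c₂, c₃⟩ := hdist a ha b hb
    rw [Measure.add_apply, Measure.add_apply, P₁.measure_Icc_prod_Icc_of_hasDerivWithinAt hd₁ a hb,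
      P₂.measure_Icc_prod_Icc_of_hasDerivWithinAt_neg hd₂₁ a hb,
      P₃.measure_Icc_prod_Icc_of_hasDerivWithinAt hd₃ a hb,
      ← ENNReal.ofReal_toReal (measure_ne_top μ _)]
    simpa [G₂, G₃, hh₁0, hh₂0] using
      ofReal_eq_add_of_piecewise ha (hm₁ hb) (hm₂ hb) (hm₃ hb) c₁ c₂ c₃
  rw [hμν]
  exact integral_add_add_graphMeasure P₁ P₂ P₃ hF
end
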